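/- Let A = A₀ ⊕ A₁ be a ℤ/2-graded commutative ring, X a set, σ : X → X a map, c ∈ A₀, and P : X² → A₀ symmetric, G : X² → A₀, S : X² → A₀ antisymmetric, F : X² → A₁, λ_K, ω_K : X → A₀, ω̂_K : X → A₁. Assume the monodromy rules: for all x, y ∈ X, P(σx, y) = P(x,y) − c·λ_K(y), G(x, σy) = G(x,y) + c·ω_K(x), and F(x, σy) = F(x,y) − c·ω̂_K(x). Define Π^{(n+2)}, Π_F^{(n+2)} by the linear chain formulas and Π_K^{(n+1)}(t_1;t_2,…,t_n;s) := λ_K(t_1)·G^n(t_1,…,t_n,s) + ω_K(t_1)·Π^{(n+1)}(t_1;t_2,…,t_n;s) − ω̂_K(t_1)·Π_F^{(n+1)}(t_1;t_2,…,t_n;s). Then for all n ≥ 1 and points r, t_1,…,t_n, s: Π^{(n+2)}(σr; t_1,…,t_n; s) − Π^{(n+2)}(r; t_1,…,t_n; s) = −c · Π_K^{(n+1)}(t_1; t_2,…,t_n; s). -/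

import Mathlib

/-!
Peeling off the first link of the chain,
`Π^{(n+2)}(r; t₁,…,tₙ; s) = P(r,t₁) Gⁿ(t₁,…,tₙ,s) − G(t₁,r) Π^{(n+1)}(t₁; t₂,…,tₙ; s)
  − F(t₁,r) Π_F^{(n+1)}(t₁; t₂,…,tₙ; s)`:
the endpoint `r` enters each term only through its first link `P(r,t₁)`, `G(t₁,r)` or `F(t₁,r)`,
and the even factor `G(t₁,r)` can be pulled to the front. Moving `r` around the cycle therefore
only shifts these three coefficients, by `−c λ_K(t₁)`, `c ω_K(t₁)` and `−c ω̂_K(t₁)`.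
-/

/-- Ordered path product `f(x₀,x₁) f(x₁,x₂) ⋯ f(x_{k−1},x_k)` starting at `x`
through the list of subsequent points; the empty product is `1`. -/
def pathProd {A X : Type*} [Monoid A] (f : X → X → A) : X → List X → A
  | _, [] => 1
  | x, y :: l => f x y * pathProd f y l

/-- The fundamental linear chain block
`Π^{(n+2)}(r;t₁,…,tₙ;s) = ∑_{α=0}^{n} (−1)^α G^α(t_α,…,t₁,r) P(t_α,t_{α+1}) G^{n−α}(t_{α+1},…,tₙ,s)
 − ∑_{α=0}^{n−1} ∑_{β=0}^{n−1−α} (−1)^α G^α(t_α,…,t₁,r) F(t_{α+1},t_α)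
   S^β(t_{α+1},…,t_{α+β+1}) F(t_{α+β+1},t_{α+β+2}) G^{n−1−α−β}(t_{α+β+2},…,tₙ,s)`,
with `t₀ := r`, `t_{n+1} := s`. -/
def PiBlock {A X : Type*} [Ring A] (P G S F : X → X → A)
    (r : X) (ts : List X) (s : X) : A :=
  let n := ts.length
  let pt : ℕ → X := fun i => (r :: (ts ++ [s])).getD i s
  (∑ α ∈ Finset.range (n + 1),
      (-1 : A) ^ α * pathProd G (pt α) ((List.range α).reverse.map pt)
        * P (pt α) (pt (α + 1))
        * pathProd G (pt (α + 1)) ((List.range' (α + 2) (n - α)).map pt))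
  - (∑ α ∈ Finset.range n, ∑ β ∈ Finset.range (n - α),
      (-1 : A) ^ α * pathProd G (pt α) ((List.range α).reverse.map pt)
        * F (pt (α + 1)) (pt α)
        * pathProd S (pt (α + 1)) ((List.range' (α + 2) β).map pt)
        * F (pt (α + β + 1)) (pt (α + β + 2))
        * pathProd G (pt (α + β + 2)) ((List.range' (α + β + 3) (n - 1 - α - β)).map pt))

/-- The fermionic linear chain block
`Π_F^{(n+2)}(r;t₁,…,tₙ;s) = ∑_{α=0}^{n} S^α(r,t₁,…,t_α) F(t_α,t_{α+1}) G^{n−α}(t_{α+1},…,tₙ,s)`,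
with `t₀ := r`, `t_{n+1} := s`. -/
def PiFBlock {A X : Type*} [Ring A] (S F G : X → X → A)
    (r : X) (ts : List X) (s : X) : A :=
  let n := ts.length
  let pt : ℕ → X := fun i => (r :: (ts ++ [s])).getD i s
  ∑ α ∈ Finset.range (n + 1),
    pathProd S (pt 0) ((List.range' 1 α).map pt)
      * F (pt α) (pt (α + 1))
      * pathProd G (pt (α + 1)) ((List.range' (α + 2) (n - α)).map pt)

section

variable {A X : Type*}

section pathProd

variable [Monoid A] (f : X → X → A)

@[simp] lemma pathProd_nil (x : X) : pathProd f x [] = 1 := rfl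

@[simp] lemma pathProd_cons (x y : X) (l : List X) :
    pathProd f x (y :: l) = f x y * pathProd f y l := rfl

lemma pathProd_map_reverse_range_succ (p : ℕ → X) (k : ℕ) :
    pathProd f (p (k + 1)) ((List.range (k + 1)).reverse.map p)
      = f (p (k + 1)) (p k) * pathProd f (p k) ((List.range k).reverse.map p) := by
  simp [List.range_succ]

lemma pathProd_map_reverse_range_shift {p q : ℕ → X} (hp : ∀ i, p (i + 1) = q i) (k : ℕ) :
    pathProd f (p (k + 1)) ((List.range (k + 1)).reverse.map p)
      = pathProd f (q k) ((List.range k).reverse.map q) * f (q 0) (p 0) := by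
  induction k with
  | zero => simp [hp]
  | succ k ih =>
    rw [pathProd_map_reverse_range_succ, ih, pathProd_map_reverse_range_succ, hp, hp, mul_assoc]

end pathProd

lemma List.map_range'_succ_left {p q : ℕ → X} (hp : ∀ i, p (i + 1) = q i) (a k : ℕ) :
    (List.range' (a + 1) k).map p = (List.range' a k).map q := by
  simp [List.range'_succ_left, Function.comp_def, hp]

lemma List.map_getD_range'_one (x d : X) (l : List X) :
    (List.range' 1 l.length).map (fun i => (x :: l).getD i d) = l := by
  apply List.ext_getElem
  · simp
  · intro i h _
    simp [Nat.add_comm 1, List.getElem?_eq_getElem (by simpa using h)]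

section ChainSums

variable [Ring A]

/- The two sums of `PiBlock` and the sum of `PiFBlock`, over an arbitrary point sequence `p`
(`p i = tᵢ`) instead of one read off the list `r :: ts ++ [s]`. -/

def chainSumP (P G : X → X → A) (p : ℕ → X) (n : ℕ) : A :=
  ∑ α ∈ Finset.range (n + 1),
    (-1 : A) ^ α * pathProd G (p α) ((List.range α).reverse.map p)
      * P (p α) (p (α + 1))
      * pathProd G (p (α + 1)) ((List.range' (α + 2) (n - α)).map p)

def chainSumFF (G S F : X → X → A) (p : ℕ → X) (n : ℕ) : A :=
  ∑ α ∈ Finset.range n, ∑ β ∈ Finset.range (n - α),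
    (-1 : A) ^ α * pathProd G (p α) ((List.range α).reverse.map p)
      * F (p (α + 1)) (p α)
      * pathProd S (p (α + 1)) ((List.range' (α + 2) β).map p)
      * F (p (α + β + 1)) (p (α + β + 2))
      * pathProd G (p (α + β + 2)) ((List.range' (α + β + 3) (n - 1 - α - β)).map p)

def chainSumF (S F G : X → X → A) (p : ℕ → X) (n : ℕ) : A :=
  ∑ α ∈ Finset.range (n + 1),
    pathProd S (p 0) ((List.range' 1 α).map p)
      * F (p α) (p (α + 1))
      * pathProd G (p (α + 1)) ((List.range' (α + 2) (n - α)).map p)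

lemma PiBlock_eq_chainSum (P G S F : X → X → A) (r : X) (ts : List X) (s : X) :
    PiBlock P G S F r ts s
      = chainSumP P G (fun i => (r :: (ts ++ [s])).getD i s) ts.length
        - chainSumFF G S F (fun i => (r :: (ts ++ [s])).getD i s) ts.length := rfl

lemma PiFBlock_eq_chainSumF (S F G : X → X → A) (r : X) (ts : List X) (s : X) :
    PiFBlock S F G r ts s = chainSumF S F G (fun i => (r :: (ts ++ [s])).getD i s) ts.length :=
  rfl

lemma neg_one_pow_succ_mul_mul_central_mul {g : A} (hg : ∀ a, Commute g a) (k : ℕ) (x y : A) :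
    (-1 : A) ^ (k + 1) * (x * (g * y)) = -(g * ((-1) ^ k * (x * y))) := by
  rw [← (hg x).left_comm, ← (hg _).left_comm, pow_succ, mul_neg_one, neg_mul, mul_neg]

variable {p q : ℕ → X} (hp : ∀ i, p (i + 1) = q i)
include hp

lemma chainSumP_succ (P G : X → X → A) (hG : ∀ a, Commute (G (q 0) (p 0)) a) (n : ℕ) :
    chainSumP P G p (n + 1)
      = P (p 0) (q 0) * pathProd G (q 0) ((List.range' 1 (n + 1)).map q)
        - G (q 0) (p 0) * chainSumP P G q n := by
  rw [chainSumP, Finset.sum_range_succ', chainSumP, Finset.mul_sum, sub_eq_add_neg,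
    ← Finset.sum_neg_distrib, add_comm]
  congr 1
  · simp [List.map_range'_succ_left hp, hp]
  · refine Finset.sum_congr rfl fun α _ => ?_
    rw [pathProd_map_reverse_range_shift G hp]
    simp only [hp, Nat.add_sub_add_right, List.map_range'_succ_left hp, mul_assoc]
    exact neg_one_pow_succ_mul_mul_central_mul hG _ _ _

lemma chainSumFF_succ (G S F : X → X → A) (hG : ∀ a, Commute (G (q 0) (p 0)) a) (n : ℕ) :
    chainSumFF G S F p (n + 1)
      = F (q 0) (p 0) * chainSumF S F G q n - G (q 0) (p 0) * chainSumFF G S F q n := by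
  rw [chainSumFF, Finset.sum_range_succ', chainSumF, chainSumFF, Finset.mul_sum, Finset.mul_sum,
    sub_eq_add_neg, ← Finset.sum_neg_distrib, add_comm]
  congr 1
  · refine Finset.sum_congr rfl fun β _ => ?_
    simp [hp, List.map_range'_succ_left hp, mul_assoc]
  · refine Finset.sum_congr rfl fun α _ => ?_
    rw [Finset.mul_sum, ← Finset.sum_neg_distrib]
    refine Finset.sum_congr (by congr 1; omega) fun β _ => ?_
    rw [pathProd_map_reverse_range_shift G hp, show α + 1 + β + 1 = α + β + 1 + 1 by omega,
      show α + 1 + β + 2 = α + β + 2 + 1 by omega, show α + 1 + β + 3 = α + β + 3 + 1 by omega,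
      show n + 1 - 1 - (α + 1) - β = n - 1 - α - β by omega]
    simp only [hp, List.map_range'_succ_left hp, mul_assoc]
    exact neg_one_pow_succ_mul_mul_central_mul hG _ _ _

end ChainSums

lemma PiBlock_cons [Ring A] (P G S F : X → X → A) (r t : X) (ts : List X) (s : X)
    (hG : ∀ a, Commute (G t r) a) :
    PiBlock P G S F r (t :: ts) s
      = P r t * pathProd G t (ts ++ [s]) - G t r * PiBlock P G S F t ts s
        - F t r * PiFBlock S F G t ts s := by
  have hp : ∀ i, (r :: t :: (ts ++ [s])).getD (i + 1) s = (t :: (ts ++ [s])).getD i s :=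
    fun _ => rfl
  rw [PiBlock_eq_chainSum, PiBlock_eq_chainSum, PiFBlock_eq_chainSumF, List.length_cons,
    chainSumP_succ hp _ _ hG, chainSumFF_succ hp _ _ _ hG]
  have hpath : (List.range' 1 (ts.length + 1)).map (fun i => (t :: (ts ++ [s])).getD i s)
      = ts ++ [s] := by
    simpa using List.map_getD_range'_one t s (ts ++ [s])
  simp only [List.getD_cons_zero, hpath, mul_sub]
  abel

end

theorem PiBlock_monodromy_general {A X : Type*} [Ring A]
    (σ : X → X) (c : A) (P G S F : X → X → A) (lamK omK omhK : X → A)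
    (hGcentral : ∀ x y a, G x y * a = a * G x y)
    (hPmono : ∀ x y, P (σ x) y = P x y - c * lamK y)
    (hGmono : ∀ x y, G x (σ y) = G x y + c * omK x)
    (hFmono : ∀ x y, F x (σ y) = F x y - c * omhK x)
    (r : X) (t1 : X) (rest : List X) (s : X) :
    PiBlock P G S F (σ r) (t1 :: rest) s - PiBlock P G S F r (t1 :: rest) s
      = -(c * (lamK t1 * pathProd G t1 (rest ++ [s])
          + omK t1 * PiBlock P G S F t1 rest s
          - omhK t1 * PiFBlock S F G t1 rest s)) := by
  rw [PiBlock_cons P G S F (σ r) t1 rest s (hGcentral t1 (σ r)),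
    PiBlock_cons P G S F r t1 rest s (hGcentral t1 r), hPmono, hGmono, hFmono]
  noncomm_ring

/-- B-cycle monodromy of the fundamental chain block in its endpoint:
`Π^{(n+2)}(σr;t₁,…,tₙ;s) − Π^{(n+2)}(r;t₁,…,tₙ;s) = −c·Π_K^{(n+1)}(t₁;t₂,…,tₙ;s)`,
where `Π_K^{(n+1)}(t₁;t₂,…,tₙ;s) = λ_K(t₁) Gⁿ(t₁,…,tₙ,s) + ω_K(t₁) Π^{(n+1)}(t₁;t₂,…,tₙ;s)
 − ω̂_K(t₁) Π_F^{(n+1)}(t₁;t₂,…,tₙ;s)`, given the monodromy rules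
`P(σx,y) = P(x,y) − c λ_K(y)`, `G(x,σy) = G(x,y) + c ω_K(x)`,
`F(x,σy) = F(x,y) − c ω̂_K(x)`, in a ℤ/2-graded commutative ring with
`c, P, G, S, λ_K, ω_K` even (central), `P` symmetric, `S` antisymmetric, and
`F, ω̂_K` odd (pairwise anticommuting). -/
theorem PiBlock_monodromy {A X : Type*} [Ring A]
    (σ : X → X) (c : A) (P G S F : X → X → A) (lamK omK omhK : X → A)
    (hPsymm : ∀ x y, P x y = P y x)
    (hSanti : ∀ x y, S x y = -S y x)
    (hccentral : ∀ a, c * a = a * c)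
    (hPcentral : ∀ x y a, P x y * a = a * P x y)
    (hGcentral : ∀ x y a, G x y * a = a * G x y)
    (hScentral : ∀ x y a, S x y * a = a * S x y)
    (hlamcentral : ∀ x a, lamK x * a = a * lamK x)
    (homcentral : ∀ x a, omK x * a = a * omK x)
    (hFodd : ∀ x y z w, F x y * F z w = -(F z w * F x y))
    (homhodd : ∀ x y, omhK x * omhK y = -(omhK y * omhK x))
    (homhF : ∀ x z w, omhK x * F z w = -(F z w * omhK x))
    (hPmono : ∀ x y, P (σ x) y = P x y - c * lamK y)
    (hGmono : ∀ x y, G x (σ y) = G x y + c * omK x)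
    (hFmono : ∀ x y, F x (σ y) = F x y - c * omhK x)
    (r : X) (t1 : X) (rest : List X) (s : X) :
    PiBlock P G S F (σ r) (t1 :: rest) s - PiBlock P G S F r (t1 :: rest) s
      = -(c * (lamK t1 * pathProd G t1 (rest ++ [s])
          + omK t1 * PiBlock P G S F t1 rest s
          - omhK t1 * PiFBlock S F G t1 rest s)) :=
  PiBlock_monodromy_general σ c P G S F lamK omK omhK hGcentral hPmono hGmono hFmono r t1 rest s
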